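/- arXiv:2207.13244 — 2 statements merged into one kernel-verified Lean document; each statement's English description precedes it below -/
import Mathlib

section
/- Let G be a graph obtained from a bipartite graph with parts S and T by adding extra edges inside the parts, and suppose G is properly k-colored so that no added edge within S is an (i,j)-edge and no added edge within T is an (i,j)-edge, for some fixed colors i ≠ j. Then the k-coloring of G is Kempe equivalent to a k-coloring in which color i does not appear on S and color j does not appear on T. -/
open SimpleGraph

variable {V : Type*}

/-- `c` is a proper `k`-coloring of the simple graph `G`. -/
def IsProperColoring (G : SimpleGraph V) (k : ℕ) (c : V → Fin k) : Prop :=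
  ∀ ⦃u v : V⦄, G.Adj u v → c u ≠ c v

/-- The subgraph of `G` spanned by the vertices colored `i` or `j` (all other
vertices are isolated in this graph). -/
def twoColorSub (G : SimpleGraph V) {k : ℕ} (c : V → Fin k) (i j : Fin k) :
    SimpleGraph V where
  Adj u v := G.Adj u v ∧ (c u = i ∨ c u = j) ∧ (c v = i ∨ c v = j)
  symm := ⟨fun _ _ h => ⟨h.1.symm, h.2.2, h.2.1⟩⟩
  loopless := ⟨fun v h => G.loopless.irrefl v h.1⟩

/-- A single Kempe change: swap the colors `i` and `j` on the connected component
of the `(i,j)`-colored subgraph containing the vertex `v₀`. -/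
def KempeStep (G : SimpleGraph V) {k : ℕ} (c c' : V → Fin k) : Prop :=
  ∃ i j : Fin k, i ≠ j ∧ ∃ v₀ : V,
    (∀ v : V, (twoColorSub G c i j).Reachable v₀ v →
      (c v = i → c' v = j) ∧ (c v = j → c' v = i) ∧ (c v ≠ i → c v ≠ j → c' v = c v)) ∧
    (∀ v : V, ¬ (twoColorSub G c i j).Reachable v₀ v → c' v = c v)

/-- Two colorings are Kempe equivalent if one is obtained from the other by a
finite sequence of Kempe changes. -/
def KempeEquiv (G : SimpleGraph V) {k : ℕ} (c c' : V → Fin k) : Prop :=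
  Relation.ReflTransGen (fun a b : V → Fin k => KempeStep G a b) c c'

/-- `G` is obtained from a bipartite graph with parts `S` and `Sᶜ` by adding the
edges of `H`, each of which joins two vertices in the same part. -/
def IsBPlusE (G : SimpleGraph V) (S : Set V) (H : SimpleGraph V) : Prop :=
  H ≤ G ∧
  (∀ u v : V, G.Adj u v → ¬ H.Adj u v → (u ∈ S ↔ v ∉ S)) ∧
  (∀ u v : V, H.Adj u v → (u ∈ S ↔ v ∈ S))


/-!
Call a vertex misplaced if it lies in `S` with color `i` or outside `S` with color `j`. Since no
added edge is an `(i,j)`-edge, every `(i,j)`-edge joins `S` to its complement, so along an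
`(i,j)`-path both the part and the color alternate: the `(i,j)`-component of a misplaced vertex
consists of misplaced vertices only. Swapping `i` and `j` on it makes all of them well placed and
changes nothing else; the set of vertices colored `i` or `j`, hence the `(i,j)`-subgraph, is
unchanged, so the argument can be repeated until no vertex is misplaced.
-/

theorem swap_mem_pair_iff {α : Type*} [DecidableEq α] (i j a : α) :
    (Equiv.swap i j a = i ∨ Equiv.swap i j a = j) ↔ (a = i ∨ a = j) := by
  rw [Equiv.swap_apply_eq_iff, Equiv.swap_apply_eq_iff, Equiv.swap_apply_left,
    Equiv.swap_apply_right, or_comm]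

variable {G : SimpleGraph V} {k : ℕ}

open Classical in
noncomputable def kempeSwap (G : SimpleGraph V) (c : V → Fin k) (i j : Fin k) (v₀ : V) : V → Fin k :=
  fun v => if (twoColorSub G c i j).Reachable v₀ v then Equiv.swap i j (c v) else c v

section KempeSwap

variable {c : V → Fin k} {i j : Fin k} {v₀ : V}

theorem kempeSwap_of_reachable {v : V} (hv : (twoColorSub G c i j).Reachable v₀ v) :
    kempeSwap G c i j v₀ v = Equiv.swap i j (c v) := by
  simp [kempeSwap, hv]

theorem kempeSwap_of_not_reachable {v : V} (hv : ¬ (twoColorSub G c i j).Reachable v₀ v) :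
    kempeSwap G c i j v₀ v = c v := by
  simp [kempeSwap, hv]

theorem kempeStep_kempeSwap (hij : i ≠ j) : KempeStep G c (kempeSwap G c i j v₀) := by
  refine ⟨i, j, hij, v₀, fun v hv => ?_, fun v hv => kempeSwap_of_not_reachable hv⟩
  rw [kempeSwap_of_reachable hv]
  exact ⟨fun h => h ▸ Equiv.swap_apply_left i j, fun h => h ▸ Equiv.swap_apply_right i j,
    Equiv.swap_apply_of_ne_of_ne⟩

theorem kempeSwap_mem_pair_iff (v : V) :
    (kempeSwap G c i j v₀ v = i ∨ kempeSwap G c i j v₀ v = j) ↔ (c v = i ∨ c v = j) := by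
  by_cases hv : (twoColorSub G c i j).Reachable v₀ v
  · rw [kempeSwap_of_reachable hv, swap_mem_pair_iff]
  · rw [kempeSwap_of_not_reachable hv]

theorem twoColorSub_kempeSwap : twoColorSub G (kempeSwap G c i j v₀) i j = twoColorSub G c i j := by
  ext u v
  simp only [twoColorSub, kempeSwap_mem_pair_iff]

theorem IsProperColoring.kempeSwap (hc : IsProperColoring G k c) :
    IsProperColoring G k (kempeSwap G c i j v₀) := by
  -- An edge leaving the `(i,j)`-component of `v₀` has an endpoint colored neither `i` nor `j`.
  have boundary : ∀ ⦃u v⦄, G.Adj u v → (twoColorSub G c i j).Reachable v₀ u →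
      ¬ (twoColorSub G c i j).Reachable v₀ v → Equiv.swap i j (c u) ≠ c v := by
    intro u v huv hu hv hswap
    by_cases hcu : c u = i ∨ c u = j
    · refine hv (hu.trans (Adj.reachable ⟨huv, hcu, ?_⟩))
      rw [← hswap, swap_mem_pair_iff]
      exact hcu
    · rw [Equiv.swap_apply_of_ne_of_ne (fun h => hcu (.inl h)) (fun h => hcu (.inr h))] at hswap
      exact hc huv hswap
  intro u v huv
  by_cases hu : (twoColorSub G c i j).Reachable v₀ u <;>
    by_cases hv : (twoColorSub G c i j).Reachable v₀ v
  · simpa only [kempeSwap_of_reachable hu, kempeSwap_of_reachable hv] using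
      (Equiv.swap i j).injective.ne (hc huv)
  · simpa only [kempeSwap_of_reachable hu, kempeSwap_of_not_reachable hv] using boundary huv hu hv
  · simpa only [kempeSwap_of_not_reachable hu, kempeSwap_of_reachable hv] using
      (boundary huv.symm hv hu).symm
  · simpa only [kempeSwap_of_not_reachable hu, kempeSwap_of_not_reachable hv] using hc huv

end KempeSwap

def misplaced (S : Set V) (c : V → Fin k) (i j : Fin k) : Set V :=
  {v | (v ∈ S ∧ c v = i) ∨ (v ∉ S ∧ c v = j)}

section Misplaced

variable {S : Set V} {c : V → Fin k} {i j : Fin k}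

theorem mem_misplaced_of_adj (hc : IsProperColoring G k c)
    (hcross : ∀ u v, (twoColorSub G c i j).Adj u v → (u ∈ S ↔ v ∉ S)) {u v : V}
    (huv : (twoColorSub G c i j).Adj u v) (hu : u ∈ misplaced S c i j) :
    v ∈ misplaced S c i j := by
  have hne : c u ≠ c v := hc huv.1
  rcases hu with ⟨hu, hcu⟩ | ⟨hu, hcu⟩
  · exact .inr ⟨(hcross u v huv).mp hu, huv.2.2.resolve_left (hcu ▸ hne).symm⟩
  · exact .inl ⟨not_not.mp (mt (hcross u v huv).mpr hu), huv.2.2.resolve_right (hcu ▸ hne).symm⟩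

theorem mem_misplaced_of_reachable (hc : IsProperColoring G k c)
    (hcross : ∀ u v, (twoColorSub G c i j).Adj u v → (u ∈ S ↔ v ∉ S)) {u v : V}
    (huv : (twoColorSub G c i j).Reachable u v) (hu : u ∈ misplaced S c i j) :
    v ∈ misplaced S c i j := by
  obtain ⟨p⟩ := huv
  induction p with
  | nil => exact hu
  | cons hadj _ ih => exact ih (mem_misplaced_of_adj hc hcross hadj hu)

theorem misplaced_kempeSwap_ssubset (hij : i ≠ j) (hc : IsProperColoring G k c)
    (hcross : ∀ u v, (twoColorSub G c i j).Adj u v → (u ∈ S ↔ v ∉ S)) {v₀ : V}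
    (hv₀ : v₀ ∈ misplaced S c i j) :
    misplaced S (kempeSwap G c i j v₀) i j ⊂ misplaced S c i j := by
  have swapped : ∀ v, (twoColorSub G c i j).Reachable v₀ v →
      v ∉ misplaced S (kempeSwap G c i j v₀) i j := by
    intro v hv
    simp only [misplaced, Set.mem_ofPred, kempeSwap_of_reachable hv]
    rcases mem_misplaced_of_reachable hc hcross hv hv₀ with ⟨hS, hcv⟩ | ⟨hS, hcv⟩
    · simp [hS, hcv, hij.symm]
    · simp [hS, hcv, hij]
  refine ⟨fun v hv => ?_, fun h => swapped v₀ .rfl (h hv₀)⟩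
  by_cases hreach : (twoColorSub G c i j).Reachable v₀ v
  · exact absurd hv (swapped v hreach)
  · simp only [misplaced, Set.mem_ofPred, kempeSwap_of_not_reachable hreach] at hv ⊢
    exact hv

theorem exists_kempeEquiv_misplaced_eq_empty [Finite V] (hij : i ≠ j)
    (c : V → Fin k) (hc : IsProperColoring G k c)
    (hcross : ∀ u v, (twoColorSub G c i j).Adj u v → (u ∈ S ↔ v ∉ S)) :
    ∃ c', KempeEquiv G c c' ∧ IsProperColoring G k c' ∧ misplaced S c' i j = ∅ := by
  induction hn : (misplaced S c i j).ncard using Nat.strong_induction_on generalizing c with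
  | _ n ih =>
  rcases (misplaced S c i j).eq_empty_or_nonempty with hempty | ⟨v₀, hv₀⟩
  · exact ⟨c, .refl, hc, hempty⟩
  have hcross' : ∀ u v, (twoColorSub G (kempeSwap G c i j v₀) i j).Adj u v → (u ∈ S ↔ v ∉ S) := by
    rw [twoColorSub_kempeSwap]
    exact hcross
  obtain ⟨c', hequiv, hc', hmis⟩ := ih _
    (hn ▸ Set.ncard_lt_ncard (misplaced_kempeSwap_ssubset hij hc hcross hv₀)) _ hc.kempeSwap
    hcross' rfl
  exact ⟨c', .head (kempeStep_kempeSwap hij) hequiv, hc', hmis⟩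

end Misplaced

/-- If no added edge (inside `S` or inside `T = Sᶜ`) is an
`(i,j)`-edge, then the coloring is Kempe equivalent to one in which color `i`
does not appear on `S` and color `j` does not appear on `T`. -/
theorem kempe_equiv_avoid_colors_on_parts {V : Type*} [Fintype V]
    (G : SimpleGraph V) (S : Set V) (H : SimpleGraph V) (hBE : IsBPlusE G S H)
    (k : ℕ) (i j : Fin k) (hij : i ≠ j)
    (c : V → Fin k) (hc : IsProperColoring G k c)
    (hno : ∀ u v : V, H.Adj u v → ¬ ((c u = i ∧ c v = j) ∨ (c u = j ∧ c v = i))) :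
    ∃ c' : V → Fin k, KempeEquiv G c c' ∧ IsProperColoring G k c' ∧
      (∀ v ∈ S, c' v ≠ i) ∧ (∀ v ∉ S, c' v ≠ j) := by
  have hcross : ∀ u v, (twoColorSub G c i j).Adj u v → (u ∈ S ↔ v ∉ S) := by
    rintro u v ⟨huv, hu, hv⟩
    refine hBE.2.1 u v huv fun hH => hno u v hH ?_
    have hne : c u ≠ c v := hc huv
    rcases hu with hu | hu <;> rcases hv with hv | hv <;> simp_all
  obtain ⟨c', hequiv, hc', hmis⟩ := exists_kempeEquiv_misplaced_eq_empty (S := S) hij c hc hcross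
  refine ⟨c', hequiv, hc', fun v hv hcv => ?_, fun v hv hcv => ?_⟩
  · exact (Set.eq_empty_iff_forall_notMem.mp hmis) v (.inl ⟨hv, hcv⟩)
  · exact (Set.eq_empty_iff_forall_notMem.mp hmis) v (.inr ⟨hv, hcv⟩)
end

section
/- For every integer k ≥ 4 there exists a (k-1)-colorable graph G obtained from a bipartite graph by adding k(k-1)/2 edges inside the parts, such that G admits two proper k-colorings that are not Kempe equivalent. -/
/-!
Take rows `{aᵢ, bᵢ, cᵢ}` for `i < k`, join `aᵢ` to `bⱼ, cⱼ` for `i ≠ j` (a bipartite graph with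
parts `{aᵢ}` and `{bᵢ, cᵢ}`) and add the `k(k-1)/2` edges `bᵢcⱼ` for `i < j`. Coloring each row by
its index is frozen, i.e. every Kempe chain is a whole two-colored class: for `i < j` the added
edge `bᵢcⱼ` completes the path `aᵢ cⱼ bᵢ aⱼ`, and every other vertex of rows `i, j` is adjacent
to `aᵢ` or `aⱼ`. So Kempe changes only permute its colors, and every coloring Kempe equivalent to
it has the rows as color classes, which the proper 3-coloring by column does not.
-/

open SimpleGraph

variable {V : Type*}

section Frozen

variable {G : SimpleGraph V} {k : ℕ}

lemma twoColorSub_comm (G : SimpleGraph V) (c : V → Fin k) (i j : Fin k) :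
    twoColorSub G c i j = twoColorSub G c j i := by
  ext u v
  simp only [twoColorSub, or_comm]

lemma twoColorSub_perm_comp (G : SimpleGraph V) (c : V → Fin k) (σ : Equiv.Perm (Fin k))
    (i j : Fin k) : twoColorSub G (σ ∘ c) i j = twoColorSub G c (σ.symm i) (σ.symm j) := by
  ext u v
  simp only [twoColorSub, Function.comp_apply, Equiv.eq_symm_apply]

lemma twoColorSub_reachable_eq_or_color {c : V → Fin k} {i j : Fin k} {u v : V}
    (h : (twoColorSub G c i j).Reachable u v) : u = v ∨ c v = i ∨ c v = j := by
  obtain ⟨w⟩ := h.symm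
  cases w with
  | nil => exact Or.inl rfl
  | cons hadj _ => exact Or.inr hadj.2.1

def IsKempeFrozen (G : SimpleGraph V) (c : V → Fin k) : Prop :=
  ∀ ⦃i j : Fin k⦄, i ≠ j → ∀ ⦃u v : V⦄, (c u = i ∨ c u = j) → (c v = i ∨ c v = j) →
    (twoColorSub G c i j).Reachable u v

lemma IsKempeFrozen.perm_comp {c : V → Fin k} (hc : IsKempeFrozen G c) (σ : Equiv.Perm (Fin k)) :
    IsKempeFrozen G (σ ∘ c) := by
  intro i j hij u v hu hv
  rw [twoColorSub_perm_comp]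
  simp only [Function.comp_apply, ← Equiv.eq_symm_apply] at hu hv
  exact hc (σ.symm.injective.ne hij) hu hv

/-- A Kempe change of a frozen coloring either does nothing or swaps two whole color classes. -/
lemma IsKempeFrozen.exists_perm_of_kempeStep {c c' : V → Fin k} (hc : IsKempeFrozen G c)
    (h : KempeStep G c c') : ∃ σ : Equiv.Perm (Fin k), c' = σ ∘ c := by
  obtain ⟨i, j, hij, v₀, hin, hout⟩ := h
  by_cases hv₀ : c v₀ = i ∨ c v₀ = j
  · refine ⟨Equiv.swap i j, funext fun v => ?_⟩
    by_cases hv : c v = i ∨ c v = j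
    · obtain ⟨hi, hj, -⟩ := hin v (hc hij hv₀ hv)
      rcases hv with hv | hv
      · simp [hv, hi hv]
      · simp [hv, hj hv]
    · push Not at hv
      have hnr : ¬ (twoColorSub G c i j).Reachable v₀ v := fun hr => by
        rcases twoColorSub_reachable_eq_or_color hr with rfl | hv' <;> tauto
      simp [hout v hnr, Equiv.swap_apply_of_ne_of_ne hv.1 hv.2]
  · refine ⟨1, funext fun v => ?_⟩
    by_cases hr : (twoColorSub G c i j).Reachable v₀ v
    · obtain rfl : v = v₀ := (twoColorSub_reachable_eq_or_color hr.symm).resolve_right hv₀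
      push Not at hv₀
      simpa using (hin v hr).2.2 hv₀.1 hv₀.2
    · simpa using hout v hr

lemma IsKempeFrozen.exists_perm_of_kempeEquiv {c c' : V → Fin k} (hc : IsKempeFrozen G c)
    (h : KempeEquiv G c c') : ∃ σ : Equiv.Perm (Fin k), c' = σ ∘ c := by
  induction h with
  | refl => exact ⟨1, rfl⟩
  | tail _ hstep ih =>
    obtain ⟨σ, rfl⟩ := ih
    obtain ⟨τ, rfl⟩ := (hc.perm_comp σ).exists_perm_of_kempeStep hstep
    exact ⟨τ * σ, rfl⟩

end Frozen

-- Vertex `(i, 0)` is `aᵢ`, `(i, 1)` is `bᵢ` and `(i, 2)` is `cᵢ`.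
namespace KempeExample

variable {k : ℕ}

def base (k : ℕ) : SimpleGraph (Fin k × Fin 3) :=
  fromRel fun u v => u.2 = 0 ∧ v.2 ≠ 0 ∧ u.1 ≠ v.1

def added (k : ℕ) : SimpleGraph (Fin k × Fin 3) :=
  fromRel fun u v => u.2 = 1 ∧ v.2 = 2 ∧ u.1 < v.1

def graph (k : ℕ) : SimpleGraph (Fin k × Fin 3) := base k ⊔ added k

lemma isBPlusE : IsBPlusE (graph k) {v | v.2 = 0} (added k) := by
  refine ⟨le_sup_right, ?_, ?_⟩
  · rintro u v (⟨-, ⟨hu, hv, -⟩ | ⟨hv, hu, -⟩⟩ | hadd) hnot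
    · simp [hu, hv]
    · simp [hu, hv]
    · exact absurd hadd hnot
  · rintro u v ⟨-, ⟨hu, hv, -⟩ | ⟨hv, hu, -⟩⟩ <;> simp [hu, hv]

lemma graph_adj_fst_ne {u v : Fin k × Fin 3} (h : (graph k).Adj u v) : u.1 ≠ v.1 := by
  rcases h with ⟨-, ⟨-, -, h⟩ | ⟨-, -, h⟩⟩ | ⟨-, ⟨-, -, h⟩ | ⟨-, -, h⟩⟩
  exacts [h, h.symm, h.ne, h.ne']

lemma graph_adj_snd_ne {u v : Fin k × Fin 3} (h : (graph k).Adj u v) : u.2 ≠ v.2 := by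
  rcases h with ⟨-, ⟨hu, hv, -⟩ | ⟨hv, hu, -⟩⟩ | ⟨-, ⟨hu, hv, -⟩ | ⟨hv, hu, -⟩⟩ <;> grind

lemma graph_adj_of_snd_eq_zero {u v : Fin k × Fin 3} (hu : u.2 = 0) (hv : v.2 ≠ 0)
    (h : u.1 ≠ v.1) : (graph k).Adj u v :=
  Or.inl ⟨fun huv => h (congrArg Prod.fst huv), Or.inl ⟨hu, hv, h⟩⟩

lemma graph_adj_of_lt {i j : Fin k} (h : i < j) : (graph k).Adj (i, 1) (j, 2) :=
  Or.inr ⟨by simp, Or.inl ⟨rfl, rfl, h⟩⟩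

lemma isKempeFrozen_fst : IsKempeFrozen (graph k) Prod.fst := by
  intro i j hij u v hu hv
  wlog hlt : i < j generalizing i j
  · rw [twoColorSub_comm]
    exact this hij.symm hu.symm hv.symm ((not_lt.mp hlt).lt_of_ne hij.symm)
  set H := twoColorSub (graph k) Prod.fst i j
  have adj {x y : Fin k × Fin 3} (hx : x.1 = i ∨ x.1 = j) (hy : y.1 = i ∨ y.1 = j)
      (h : (graph k).Adj x y) : H.Adj x y := ⟨h, hx, hy⟩
  have hne : i ≠ j := hlt.ne
  have h0 : H.Reachable (i, 0) (j, 0) :=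
    (adj (.inl rfl) (.inr rfl) (graph_adj_of_snd_eq_zero rfl (by simp) hne)).reachable.trans <|
      (adj (.inr rfl) (.inl rfl) (graph_adj_of_lt hlt).symm).reachable.trans
      (adj (.inl rfl) (.inr rfl) (graph_adj_of_snd_eq_zero rfl (by simp) hne.symm).symm).reachable
  suffices h : ∀ w : Fin k × Fin 3, (w.1 = i ∨ w.1 = j) → H.Reachable (i, 0) w from
    (h u hu).symm.trans (h v hv)
  rintro ⟨r, t⟩ hr
  by_cases ht : t = 0
  · subst ht
    rcases hr with rfl | rfl
    exacts [.refl _, h0]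
  · rcases hr with rfl | rfl
    · exact h0.trans
        (adj (.inr rfl) (.inl rfl) (graph_adj_of_snd_eq_zero rfl ht hne.symm)).reachable
    · exact (adj (.inl rfl) (.inr rfl) (graph_adj_of_snd_eq_zero rfl ht hne)).reachable

lemma added_edgeSet :
    (added k).edgeSet = (fun p : Fin k × Fin k => s((p.1, 1), (p.2, 2))) '' {p | p.1 < p.2} := by
  ext e
  induction e with
  | _ u v =>
    obtain ⟨i, s⟩ := u
    obtain ⟨j, t⟩ := v
    simp only [added, mem_edgeSet, fromRel_adj, Set.mem_image, Set.mem_ofPred_eq, Prod.exists,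
      Sym2.eq_iff, Prod.mk.injEq]
    grind

lemma ncard_added_edgeSet : (added k).edgeSet.ncard = k.choose 2 := by
  rw [added_edgeSet, Set.ncard_image_of_injective]
  · rw [Set.ncard_eq_toFinset_card']
    simpa using Fintype.card_product_filter_lt (α := Fin k)
  · intro p q h
    simpa [Prod.ext_iff] using h

end KempeExample

open KempeExample

/-- For every `k ≥ 4` there is a `(k-1)`-colorable `B + E_ℓ` graph
with `ℓ = k(k-1)/2` added edges having two proper `k`-colorings that are not
Kempe equivalent. -/
theorem exists_colorable_BplusE_with_nonequivalent_colorings (k : ℕ) (hk : 4 ≤ k) :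
    ∃ (V : Type) (_ : Fintype V) (G : SimpleGraph V) (S : Set V) (H : SimpleGraph V),
      IsBPlusE G S H ∧
      G.Colorable (k - 1) ∧
      H.edgeSet.ncard = k * (k - 1) / 2 ∧
      ∃ c c' : V → Fin k, IsProperColoring G k c ∧ IsProperColoring G k c' ∧
        ¬ KempeEquiv G c c' := by
  have hcol : (graph k).Colorable 3 := ⟨Coloring.mk Prod.snd fun h => graph_adj_snd_ne h⟩
  let byColumn : Fin k × Fin 3 → Fin k := fun v => Fin.castLE (by omega) v.2
  refine ⟨_, inferInstance, graph k, _, added k, isBPlusE, hcol.mono (by omega),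
    by rw [ncard_added_edgeSet, Nat.choose_two_right], Prod.fst, byColumn,
    fun _ _ h => graph_adj_fst_ne h,
    fun _ _ h hc => graph_adj_snd_ne h (Fin.castLE_injective _ hc), fun h => ?_⟩
  obtain ⟨σ, hσ⟩ := isKempeFrozen_fst.exists_perm_of_kempeEquiv h
  have h01 : σ ⟨0, by omega⟩ = σ ⟨1, by omega⟩ :=
    (congrFun hσ (⟨0, by omega⟩, 0)).symm.trans (congrFun hσ (⟨1, by omega⟩, 0))
  simp at h01
end
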